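/- Let c > 2 be an integer and ℓ a nonzero integer. Then ∑_{b=1}^∞ ∑_{1 ≤ a ≤ b, gcd(a,b)=1} e^{−2πi ℓ a/b} b^{−c} = σ_{1−c}(ℓ)/ζ(c), where σ_{1−c}(ℓ) = ∑_{d ∣ ℓ, d > 0} d^{1−c}. (Ramanujan's identity for Ramanujan sums.) -/

import Mathlib

/-!
Grouping the fractions `a / b`, `1 ≤ a ≤ b`, by their reduced denominator gives
`∑_{d ∣ b} c_d(ℓ) = ∑_{a=1}^{b} e^{-2πiℓa/b} = b · [b ∣ ℓ]`, so by Möbius inversion `c(ℓ) = μ ⋆ g`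
with `g(n) = n · [n ∣ ℓ]`. Taking Dirichlet series, `L(c(ℓ), s) = L(g, s) / ζ(s)`, and since
`ℓ ≠ 0` the series `L(g, s) = ∑_{d ∣ ℓ} d^{1-s}` is a finite sum.
-/

open Real

/-- The Riemann zeta value `ζ(s) = ∑_{n ≥ 1} n^{-s}` as a real series. -/
noncomputable def zetaR (s : ℝ) : ℝ := ∑' n : ℕ, ((n : ℝ) + 1) ^ (-s)

open Complex Finset
open scoped LSeries.notation ArithmeticFunction.Moebius

lemma sum_Icc_pow_eq_zero_of_pow_eq_one {K : Type*} [Field K] {z : K} {b : ℕ} (hz : z ^ b = 1)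
    (h1 : z ≠ 1) : ∑ a ∈ Icc 1 b, z ^ a = 0 := by
  have hshift : ∑ a ∈ Icc 1 b, z ^ a = z * ∑ a ∈ range b, z ^ a := by
    rw [mul_sum, ← Ico_add_one_right_eq_Icc, sum_Ico_eq_sum_range]
    simp [pow_add]
  rw [hshift, geom_sum_eq h1, hz, sub_self, zero_div, mul_zero]

lemma cexp_neg_two_pi_I_mul_div (ℓ : ℤ) (a b : ℕ) :
    cexp (-2 * π * I * ℓ * a / b) = (cexp (2 * π * I / b) ^ (-ℓ)) ^ a := by
  rw [← Complex.exp_int_mul, ← Complex.exp_nat_mul]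
  push_cast
  ring_nf

lemma sum_Icc_cexp_eq_ite (ℓ : ℤ) {b : ℕ} (hb : b ≠ 0) :
    ∑ a ∈ Icc 1 b, cexp (-2 * π * I * ℓ * a / b) = if (b : ℤ) ∣ ℓ then (b : ℂ) else 0 := by
  have hζ := isPrimitiveRoot_exp b hb
  simp_rw [cexp_neg_two_pi_I_mul_div]
  split_ifs with hdvd
  · simp [(hζ.zpow_eq_one_iff_dvd _).mpr (dvd_neg.mpr hdvd)]
  · refine sum_Icc_pow_eq_zero_of_pow_eq_one ?_ ?_
    · rw [← zpow_natCast, ← zpow_mul, mul_comm (-ℓ), zpow_mul, zpow_natCast, hζ.pow_eq_one,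
        one_zpow]
    · rwa [Ne, hζ.zpow_eq_one_iff_dvd, dvd_neg]

lemma Nat.gcd_mul_div_eq_div {a d b : ℕ} (hd : d ∣ b) (had : a.gcd d = 1) :
    (a * (b / d)).gcd b = b / d := by
  nth_rw 2 [← Nat.mul_div_cancel' hd]
  rw [Nat.gcd_mul_right, had, one_mul]

lemma Nat.div_pos_of_mem_divisors {d b : ℕ} (hd : d ∈ b.divisors) : 0 < b / d :=
  Nat.div_pos (Nat.divisor_le hd) (Nat.pos_of_mem_divisors hd)

/-- Every fraction `a / b` with `1 ≤ a ≤ b` is, in lowest terms, `a' / d` for a unique divisor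
`d ∣ b` and a unique `a' ≤ d` coprime to `d`. -/
lemma Nat.sum_divisors_sum_coprime_div {M : Type*} [AddCommMonoid M] (f : ℚ → M) {b : ℕ}
    (hb : b ≠ 0) :
    ∑ d ∈ b.divisors, ∑ a ∈ (Icc 1 d).filter (fun a => a.gcd d = 1), f (a / d)
      = ∑ a ∈ Icc 1 b, f (a / b) := by
  rw [sum_sigma']
  refine sum_nbij' (fun p => p.2 * (b / p.1)) (fun a => ⟨b / a.gcd b, a / a.gcd b⟩)
    ?_ ?_ ?_ ?_ ?_
  · rintro ⟨d, a⟩ hp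
    simp only [mem_sigma, mem_filter, mem_Icc] at hp ⊢
    obtain ⟨hd, ⟨ha1, ha2⟩, -⟩ := hp
    exact ⟨Nat.mul_pos ha1 (Nat.div_pos_of_mem_divisors hd),
      (Nat.mul_le_mul_right _ ha2).trans (Nat.mul_div_cancel' (Nat.dvd_of_mem_divisors hd)).le⟩
  · intro a ha
    simp only [mem_Icc] at ha
    have hg : 0 < a.gcd b := Nat.gcd_pos_of_pos_left _ ha.1
    simp only [mem_sigma, Nat.mem_divisors, mem_filter, mem_Icc]
    exact ⟨⟨Nat.div_dvd_of_dvd (Nat.gcd_dvd_right a b), hb⟩,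
      ⟨Nat.div_pos (Nat.gcd_le_left _ ha.1) hg, Nat.div_le_div_right ha.2⟩,
      Nat.coprime_div_gcd_div_gcd hg⟩
  · rintro ⟨d, a⟩ hp
    simp only [mem_sigma, mem_filter] at hp
    obtain ⟨hd, -, had⟩ := hp
    have hdb := Nat.dvd_of_mem_divisors hd
    simp only [Nat.gcd_mul_div_eq_div hdb had, Nat.div_div_self hdb hb,
      Nat.mul_div_cancel _ (Nat.div_pos_of_mem_divisors hd)]
  · intro a ha
    simp only [Nat.div_div_self (Nat.gcd_dvd_right a b) hb]
    exact Nat.div_mul_cancel (Nat.gcd_dvd_left a b)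
  · rintro ⟨d, a⟩ hp
    have hd := (mem_sigma.mp hp).1
    have hd0 : (d : ℚ) ≠ 0 := Nat.cast_ne_zero.mpr (Nat.pos_of_mem_divisors hd).ne'
    congr 1
    rw [Nat.cast_mul, Nat.cast_div (Nat.dvd_of_mem_divisors hd) hd0]
    field_simp

noncomputable def ramanujanSum (ℓ : ℤ) (b : ℕ) : ℂ :=
  ∑ a ∈ (Icc 1 b).filter (fun a => Nat.gcd a b = 1), cexp (-2 * π * I * ℓ * a / b)

lemma sum_divisors_ramanujanSum (ℓ : ℤ) {b : ℕ} (hb : b ≠ 0) :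
    ∑ d ∈ b.divisors, ramanujanSum ℓ d = if (b : ℤ) ∣ ℓ then (b : ℂ) else 0 := by
  have hcast (a d : ℕ) :
      cexp (-2 * π * I * ℓ * a / d) = cexp (-2 * π * I * ℓ * ((a / d : ℚ) : ℂ)) := by
    push_cast
    ring_nf
  simp only [ramanujanSum, ← sum_Icc_cexp_eq_ite ℓ hb, hcast]
  exact Nat.sum_divisors_sum_coprime_div (fun q : ℚ => cexp (-2 * π * I * ℓ * q)) hb

noncomputable def dvdIndicator (ℓ : ℤ) (n : ℕ) : ℂ := if (n : ℤ) ∣ ℓ then (n : ℂ) else 0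

lemma ramanujanSum_eq_moebius_convolution (ℓ : ℤ) {n : ℕ} (hn : n ≠ 0) :
    ramanujanSum ℓ n = (↗μ ⍟ dvdIndicator ℓ) n := by
  have hinv := ArithmeticFunction.sum_eq_iff_sum_smul_moebius_eq.mp
    fun b hb => sum_divisors_ramanujanSum ℓ (Nat.pos_iff_ne_zero.mp hb)
  rw [← hinv n (Nat.pos_of_ne_zero hn), LSeries.convolution_def]
  simp [dvdIndicator, zsmul_eq_mul]

lemma term_dvdIndicator_eq_zero {ℓ : ℤ} (hℓ : ℓ ≠ 0) (s : ℂ) {n : ℕ}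
    (hn : n ∉ ℓ.natAbs.divisors) : LSeries.term (dvdIndicator ℓ) s n = 0 := by
  rcases eq_or_ne n 0 with rfl | hn0
  · exact LSeries.term_zero _ _
  · have : ¬ (n : ℤ) ∣ ℓ := fun h =>
      hn (Nat.mem_divisors.mpr ⟨Int.natCast_dvd.mp h, Int.natAbs_ne_zero.mpr hℓ⟩)
    simp [LSeries.term_of_ne_zero hn0, dvdIndicator, this]

lemma LSeriesSummable_dvdIndicator {ℓ : ℤ} (hℓ : ℓ ≠ 0) (s : ℂ) :
    LSeriesSummable (dvdIndicator ℓ) s :=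
  summable_of_ne_finset_zero fun _ hn => term_dvdIndicator_eq_zero hℓ s hn

lemma LSeries_dvdIndicator {ℓ : ℤ} (hℓ : ℓ ≠ 0) (s : ℂ) :
    LSeries (dvdIndicator ℓ) s = ∑ d ∈ ℓ.natAbs.divisors, (d : ℂ) ^ (1 - s) := by
  rw [LSeries, tsum_eq_sum fun _ hn => term_dvdIndicator_eq_zero hℓ s hn]
  refine sum_congr rfl fun d hd => ?_
  have hd0 : (d : ℂ) ≠ 0 := Nat.cast_ne_zero.mpr (Nat.pos_of_mem_divisors hd).ne'
  rw [LSeries.term_of_ne_zero (Nat.pos_of_mem_divisors hd).ne', dvdIndicator,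
    if_pos (Int.natCast_dvd.mpr (Nat.dvd_of_mem_divisors hd)), cpow_sub _ _ hd0, cpow_one]

lemma LSeries_ramanujanSum {ℓ : ℤ} (hℓ : ℓ ≠ 0) {s : ℂ} (hs : 1 < s.re) :
    LSeries (ramanujanSum ℓ) s = (∑ d ∈ ℓ.natAbs.divisors, (d : ℂ) ^ (1 - s)) / riemannZeta s := by
  have hμ : LSeries ↗μ s = (riemannZeta s)⁻¹ := by
    rw [← LSeries_one_eq_riemannZeta hs]
    exact eq_inv_of_mul_eq_one_right (LSeries_one_mul_Lseries_moebius hs)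
  rw [LSeries_congr (fun hn => ramanujanSum_eq_moebius_convolution ℓ hn),
    LSeries_convolution' (ArithmeticFunction.LSeriesSummable_moebius_iff.mpr hs)
      (LSeriesSummable_dvdIndicator hℓ s), hμ, LSeries_dvdIndicator hℓ, inv_mul_eq_div]

lemma LSeries_eq_tsum_pnat (f : ℕ → ℂ) (s : ℂ) :
    LSeries f s = ∑' n : ℕ+, f n / (n : ℂ) ^ s := by
  rw [LSeries, ← Function.Injective.tsum_eq PNat.coe_injective]
  · exact tsum_congr fun n => LSeries.term_of_ne_zero n.ne_zero f s
  · intro n hn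
    exact ⟨⟨n, Nat.pos_of_ne_zero fun h => hn (h ▸ LSeries.term_zero f s)⟩, rfl⟩

lemma ofReal_zetaR {s : ℝ} (hs : 1 < s) : (zetaR s : ℂ) = riemannZeta s := by
  rw [zeta_eq_tsum_one_div_nat_add_one_cpow (by simpa using hs), zetaR, ofReal_tsum]
  refine tsum_congr fun n => ?_
  rw [ofReal_cpow (by positivity), ofReal_neg, cpow_neg, one_div]
  push_cast
  rfl

theorem stmt4 (c : ℕ) (hc : 2 < c) (ℓ : ℤ) (hℓ : ℓ ≠ 0) :
    (∑' b : ℕ+,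
        (∑ a ∈ (Finset.Icc 1 (b : ℕ)).filter (fun a => Nat.gcd a (b : ℕ) = 1),
            Complex.exp (-2 * (π : ℂ) * Complex.I * (ℓ : ℂ) * (a : ℂ) / ((b : ℕ) : ℂ))) *
          ((b : ℕ) : ℂ) ^ (-(c : ℤ)))
      = ((∑ d ∈ ℓ.natAbs.divisors, (d : ℝ) ^ (1 - (c : ℤ))) / zetaR c : ℝ) := by
  have hc1 : (1 : ℝ) < c := by exact_mod_cast hc.trans' one_lt_two
  calc _ = LSeries (ramanujanSum ℓ) c := by
        rw [LSeries_eq_tsum_pnat]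
        refine tsum_congr fun b => ?_
        rw [cpow_natCast, zpow_neg, zpow_natCast, div_eq_mul_inv]
        rfl
    _ = (∑ d ∈ ℓ.natAbs.divisors, (d : ℂ) ^ (1 - (c : ℂ))) / riemannZeta c :=
        LSeries_ramanujanSum hℓ (by simpa using hc1)
    _ = _ := by
        rw [← ofReal_natCast c, ← ofReal_zetaR hc1]
        push_cast
        congr 1
        refine sum_congr rfl fun d _ => ?_
        rw [← cpow_intCast]
        push_cast
        rfl
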